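/- For the X-rotation noise channel Λ_r(A) = R_X(θ) A R_X(θ)†, where R_X(θ) = exp(−i Σ_{l=1}^n θ_l X_l / 2), the average fidelity in the Γ_{2k} subspace satisfies B_k = C(n,k)^{−1} Σ_{S∈C([n],k)} Π_{l∈S} cos θ_l. Consequently min_l cos^k θ_l ≤ B_k ≤ max_l cos^k θ_l when all cos θ_l ≥ 0. -/

import Mathlib

open scoped BigOperators

/-- The Jordan–Wigner realization of `γ_{D(S)} = Π_{l ∈ S} (i Z_l)`: the diagonal matrix with
entry `Π_{l ∈ S} i·(−1)^{x_l}` at the computational-basis state `x`. -/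
noncomputable def gammaD (n : ℕ) (S : Finset (Fin n)) :
    Matrix (Fin n → Bool) (Fin n → Bool) ℂ :=
  Matrix.diagonal fun x => ∏ l ∈ S, (Complex.I * (if x l then (-1:ℂ) else 1))

/-- The average fidelity of a noise channel `Λ` in the `Γ_{2k}` subspace:
`B_k = (−i)^k/(2^n C(n,k)) Σ_x Σ_{|S|=k} (−1)^{Σ_{j∈S} x_j} tr(|x⟩⟨x| Λ(γ_{D(S)}))`. -/
noncomputable def Bk (n k : ℕ)
    (Λ : Matrix (Fin n → Bool) (Fin n → Bool) ℂ → Matrix (Fin n → Bool) (Fin n → Bool) ℂ) : ℂ :=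
  ((-Complex.I)^k / ((2:ℂ)^n * (n.choose k : ℂ))) *
    ∑ x : Fin n → Bool, ∑ S ∈ (Finset.univ : Finset (Fin n)).powersetCard k,
      (∏ j ∈ S, (if x j then (-1:ℂ) else 1)) *
        Matrix.trace (Matrix.single x x (1:ℂ) * Λ (gammaD n S))

/-- The Pauli `X` operator acting on qubit `l` of `n` qubits. -/
noncomputable def Xop (n : ℕ) (l : Fin n) : Matrix (Fin n → Bool) (Fin n → Bool) ℂ :=
  fun x y => if x = Function.update y l (!(y l)) then 1 else 0

/-- `R_X(θ) = exp(−i Σ_{l=1}^n θ_l X_l / 2)`. -/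
noncomputable def RX (n : ℕ) (θ : Fin n → ℝ) : Matrix (Fin n → Bool) (Fin n → Bool) ℂ :=
  NormedSpace.exp ((-(Complex.I) / 2) • ∑ l : Fin n, (θ l : ℂ) • Xop n l)

open scoped Classical

section Aux

set_option maxHeartbeats 1000000 in
lemma exp_smul_of_sq_eq_one {𝔸 : Type*} [NormedRing 𝔸] [NormedAlgebra ℂ 𝔸] [CompleteSpace 𝔸]
    (a : ℂ) (X : 𝔸) (h : X * X = 1) :
    NormedSpace.exp (a • X) = Complex.cosh a • (1 : 𝔸) + Complex.sinh a • X := by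
  have hX2 : X ^ 2 = 1 := by rw [sq, h]
  have heven : ∀ m : ℕ, X ^ (2 * m) = 1 := fun m => by
    rw [pow_mul, hX2, one_pow]
  have hodd : ∀ m : ℕ, X ^ (2 * m + 1) = X := fun m => by
    rw [pow_succ, heven, one_mul]
  have hf : ∀ n : ℕ, ((n.factorial : ℂ)⁻¹ : ℂ) • (a • X) ^ n = (a ^ n / (n.factorial : ℂ)) • X ^ n := by
    intro n
    rw [smul_pow, smul_smul, div_eq_inv_mul]
  have he : HasSum (fun m : ℕ => ((((2*m).factorial : ℂ))⁻¹ : ℂ) • (a • X) ^ (2*m))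
      (Complex.cosh a • (1:𝔸)) := by
    have := (Complex.hasSum_cosh a).smul_const (1:𝔸)
    convert this using 2 with m
    rw [hf, heven]
  have ho : HasSum (fun m : ℕ => ((((2*m+1).factorial : ℂ))⁻¹ : ℂ) • (a • X) ^ (2*m+1))
      (Complex.sinh a • X) := by
    have := (Complex.hasSum_sinh a).smul_const X
    convert this using 2 with m
    rw [hf, hodd]
  rw [NormedSpace.exp_eq_tsum (𝕂 := ℂ)]
  exact (he.even_add_odd ho).tsum_eq

/-- flip qubit `l` -/
def flip' {n : ℕ} (l : Fin n) (x : Fin n → Bool) : Fin n → Bool :=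
  Function.update x l (!(x l))

lemma flip'_flip' {n : ℕ} (l : Fin n) (x : Fin n → Bool) : flip' l (flip' l x) = x := by
  funext w
  by_cases hw : w = l
  · subst hw; simp [flip']
  · simp [flip', Function.update_of_ne hw]

lemma flip_inj {n : ℕ} (l : Fin n) {x y : Fin n → Bool} (h : flip' l x = flip' l y) : x = y := by
  have := congrArg (flip' l) h
  rwa [flip'_flip', flip'_flip'] at this

lemma flip_comm {n : ℕ} (l m : Fin n) (x : Fin n → Bool) :
    flip' l (flip' m x) = flip' m (flip' l x) := by
  by_cases h : l = m
  · subst h; rfl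
  · funext w
    by_cases hw : w = l
    · subst hw
      simp [flip', Function.update_of_ne h, Function.update_of_ne (Ne.symm h)]
    · by_cases hw' : w = m
      · subst hw'
        simp [flip', Function.update_of_ne (Ne.symm h), Function.update_of_ne h]
      · simp [flip', Function.update_of_ne hw, Function.update_of_ne hw']

lemma flip_apply_self {n : ℕ} (l : Fin n) (x : Fin n → Bool) : flip' l x l = !(x l) := by
  simp [flip']

lemma flip_apply_ne {n : ℕ} {l m : Fin n} (h : m ≠ l) (x : Fin n → Bool) :
    flip' l x m = x m := by
  simp [flip', Function.update_of_ne h]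

lemma Xop_apply {n : ℕ} (l : Fin n) (x y : Fin n → Bool) :
    Xop n l x y = if x = flip' l y then 1 else 0 := rfl

lemma Xop_mul_apply {n : ℕ} (l : Fin n) (P : Matrix (Fin n → Bool) (Fin n → Bool) ℂ)
    (x y : Fin n → Bool) : (Xop n l * P) x y = P (flip' l x) y := by
  rw [Matrix.mul_apply]
  have : ∀ z, Xop n l x z = if z = flip' l x then 1 else 0 := by
    intro z
    rw [Xop_apply]
    congr 1
    rw [eq_iff_iff]
    constructor
    · intro h; rw [h, flip'_flip']
    · intro h; rw [h, flip'_flip']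
  simp_rw [this, ite_mul, one_mul, zero_mul]
  exact Finset.sum_ite_eq' _ _ _ |>.trans (by simp)

lemma Xop_mul_self {n : ℕ} (l : Fin n) : Xop n l * Xop n l = 1 := by
  ext x y
  rw [Xop_mul_apply, Xop_apply, Matrix.one_apply]
  congr 1
  rw [eq_iff_iff]
  constructor
  · exact fun h => flip_inj l h
  · intro h; subst h; rfl

lemma Xop_commute {n : ℕ} (l m : Fin n) : Commute (Xop n l) (Xop n m) := by
  unfold Commute SemiconjBy
  ext x y
  rw [Xop_mul_apply, Xop_mul_apply, Xop_apply, Xop_apply]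
  congr 1
  rw [eq_iff_iff]
  constructor
  · intro h
    have hy : y = flip' m (flip' l x) := by
      have := congrArg (flip' m) h
      rw [flip'_flip'] at this; exact this.symm
    rw [hy, flip_comm, flip'_flip']
  · intro h
    have hy : y = flip' l (flip' m x) := by
      have := congrArg (flip' l) h
      rw [flip'_flip'] at this; exact this.symm
    rw [hy, flip_comm, flip'_flip']

noncomputable def Aop (n : ℕ) (c d : Fin n → ℂ) (l : Fin n) :
    Matrix (Fin n → Bool) (Fin n → Bool) ℂ :=
  c l • 1 + d l • Xop n l

lemma Aop_commute {n : ℕ} (c d : Fin n → ℂ) (l m : Fin n) :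
    Commute (Aop n c d l) (Aop n c d m) := by
  unfold Aop
  apply Commute.add_left <;> apply Commute.add_right
  · exact ((Commute.one_left _).smul_left _).smul_right _
  · exact ((Commute.one_left _).smul_left _).smul_right _
  · exact ((Commute.one_right _).smul_left _).smul_right _
  · exact ((Xop_commute l m).smul_left _).smul_right _

lemma noncommProd_Aop_apply {n : ℕ} (c d : Fin n → ℂ) (s : Finset (Fin n)) (x y : Fin n → Bool) :
    (s.noncommProd (Aop n c d) (fun _ _ _ _ _ => Aop_commute c d _ _)) x y =
      if ∀ l ∉ s, x l = y l then ∏ l ∈ s, (if x l = y l then c l else d l) else 0 := by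
  induction s using Finset.induction_on generalizing x with
  | empty =>
      erw [Finset.noncommProd_empty, Matrix.one_apply]
      simp [funext_iff]
  | @insert a s ha ih =>
      erw [Finset.noncommProd_insert_of_notMem _ _ _ _ ha]
      rw [Aop, Matrix.add_mul, Matrix.smul_mul, Matrix.smul_mul, one_mul,
        Matrix.add_apply, Matrix.smul_apply, Matrix.smul_apply, Xop_mul_apply, ih, ih]
      by_cases hxy : x a = y a
      · have h1 : (∀ l ∉ s, x l = y l) ↔ (∀ l ∉ insert a s, x l = y l) := by
          constructor
          · intro h l hl; exact h l (fun hls => hl (Finset.mem_insert_of_mem hls))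
          · intro h l hl
            by_cases hla : l = a
            · subst hla; exact hxy
            · exact h l (by simp [hla, hl])
        have h2 : ¬ (∀ l ∉ s, flip' a x l = y l) := by
          intro h
          have := h a ha
          rw [flip_apply_self, hxy] at this
          simp at this
        rw [if_neg h2, smul_zero, add_zero]
        rw [Finset.prod_insert ha, if_pos hxy]
        by_cases hc : ∀ l ∉ insert a s, x l = y l
        · rw [if_pos hc, if_pos (h1.2 hc), smul_eq_mul]
        · rw [if_neg hc, if_neg (fun h => hc (h1.1 h)), smul_zero]
      · have hflip : (!(x a)) = y a := by
          revert hxy; cases x a <;> cases y a <;> simp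
        have h1 : ¬ (∀ l ∉ s, x l = y l) := fun h => hxy (h a ha)
        have h2 : (∀ l ∉ s, flip' a x l = y l) ↔ (∀ l ∉ insert a s, x l = y l) := by
          constructor
          · intro h l hl
            have hls : l ∉ s := fun hls => hl (Finset.mem_insert_of_mem hls)
            have hla : l ≠ a := fun he => hl (he ▸ Finset.mem_insert_self a s)
            rw [← h l hls, flip_apply_ne hla]
          · intro h l hls
            by_cases hla : l = a
            · subst hla; rw [flip_apply_self]; exact hflip
            · rw [flip_apply_ne hla]; exact h l (by simp [hla, hls])
        have h3 : ∏ l ∈ s, (if flip' a x l = y l then c l else d l)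
            = ∏ l ∈ s, (if x l = y l then c l else d l) := by
          apply Finset.prod_congr rfl
          intro l hl
          have hla : l ≠ a := by rintro rfl; exact ha hl
          rw [flip_apply_ne hla]
        rw [if_neg h1, smul_zero, zero_add, h3]
        rw [Finset.prod_insert ha, if_neg hxy]
        by_cases hc : ∀ l ∉ insert a s, x l = y l
        · rw [if_pos hc, if_pos (h2.2 hc), smul_eq_mul]
        · rw [if_neg hc, if_neg (fun h => hc (h2.1 h)), smul_zero]

lemma matrix_exp_smul_of_sq_eq_one {m : Type*} [Fintype m] [DecidableEq m] (a : ℂ)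
    (X : Matrix m m ℂ) (h : X * X = 1) :
    NormedSpace.exp (a • X) = Complex.cosh a • (1 : Matrix m m ℂ) + Complex.sinh a • X := by
  letI : SeminormedRing (Matrix m m ℂ) := Matrix.linftyOpSemiNormedRing
  letI : NormedRing (Matrix m m ℂ) := Matrix.linftyOpNormedRing
  letI : NormedAlgebra ℂ (Matrix m m ℂ) := Matrix.linftyOpNormedAlgebra
  exact exp_smul_of_sq_eq_one a X h

noncomputable def cf (n : ℕ) (θ : Fin n → ℝ) (l : Fin n) : ℂ := (Real.cos (θ l / 2) : ℂ)
noncomputable def df (n : ℕ) (θ : Fin n → ℝ) (l : Fin n) : ℂ :=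
  -(Complex.I * (Real.sin (θ l / 2) : ℂ))

lemma RX_eq_noncommProd (n : ℕ) (θ : Fin n → ℝ) :
    RX n θ = Finset.univ.noncommProd (Aop n (cf n θ) (df n θ))
      (fun _ _ _ _ _ => Aop_commute _ _ _ _) := by
  rw [RX, Finset.smul_sum]
  have h1 : ∀ l : Fin n, (-(Complex.I) / 2) • ((θ l : ℂ) • Xop n l)
      = ((-(θ l) / 2 : ℂ) * Complex.I) • Xop n l := by
    intro l; rw [smul_smul]; ring_nf
  simp_rw [h1]
  rw [Matrix.exp_sum_of_commute]
  · apply Finset.noncommProd_congr rfl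
    intro l _
    rw [matrix_exp_smul_of_sq_eq_one _ _ (Xop_mul_self l)]
    rw [Complex.cosh_mul_I, Complex.sinh_mul_I, Aop, cf, df]
    have hcast : ((-(θ l) / 2 : ℂ)) = ((-(θ l / 2) : ℝ) : ℂ) := by push_cast; ring
    congr 1
    · congr 1
      rw [hcast, ← Complex.ofReal_cos, Real.cos_neg]
    · congr 1
      rw [hcast, ← Complex.ofReal_sin, Real.sin_neg]
      push_cast
      ring
  · intro i _ j _ _
    exact ((Xop_commute i j).smul_left _).smul_right _

lemma RX_apply (n : ℕ) (θ : Fin n → ℝ) (x y : Fin n → Bool) :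
    RX n θ x y = ∏ l : Fin n, (if x l = y l then cf n θ l else df n θ l) := by
  rw [RX_eq_noncommProd]
  have := noncommProd_Aop_apply (cf n θ) (df n θ) Finset.univ x y
  rw [this, if_pos]
  intro l hl
  exact absurd (Finset.mem_univ l) hl

lemma trace_stdBasis_mul {n : ℕ} (x : Fin n → Bool) (M : Matrix (Fin n → Bool) (Fin n → Bool) ℂ) :
    Matrix.trace (Matrix.single x x (1:ℂ) * M) = M x x := by
  rw [Matrix.trace]
  simp [Matrix.diag, Matrix.mul_apply, Matrix.single, ite_and, Finset.sum_ite_eq]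

lemma sum_prod_bool {n : ℕ} (f : Fin n → Bool → ℂ) :
    (∑ x : Fin n → Bool, ∏ l, f l (x l)) = ∏ l, (f l true + f l false) := by
  have h := Finset.prod_univ_sum (fun _ : Fin n => (Finset.univ : Finset Bool)) f
  rw [Fintype.piFinset_univ] at h
  rw [← h]
  apply Finset.prod_congr rfl
  intro l _
  rw [Fintype.sum_bool]

lemma conj_mul_entry {n : ℕ} (θ : Fin n → ℝ) (l : Fin n) (a b : Bool) :
    (if a = b then ((Real.cos (θ l / 2) : ℂ)) else -(Complex.I * (Real.sin (θ l / 2) : ℂ)))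
      * star (if a = b then ((Real.cos (θ l / 2) : ℂ)) else -(Complex.I * (Real.sin (θ l / 2) : ℂ)))
    = if a = b then ((Real.cos (θ l / 2) : ℂ))^2 else ((Real.sin (θ l / 2) : ℂ))^2 := by
  by_cases h : a = b
  · simp only [if_pos h, Complex.star_def, Complex.conj_ofReal, sq]
  · simp only [if_neg h, star_neg, star_mul', Complex.star_def, Complex.conj_ofReal,
      Complex.conj_I]
    have : Complex.I * Complex.I = -1 := Complex.I_mul_I
    ring_nf
    rw [Complex.I_sq]
    ring

noncomputable def sgn (a : Bool) : ℂ := if a then -1 else 1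
noncomputable def wf (n : ℕ) (θ : Fin n → ℝ) (l : Fin n) (a b : Bool) : ℂ :=
  if a = b then ((Real.cos (θ l / 2) : ℂ))^2 else ((Real.sin (θ l / 2) : ℂ))^2

lemma M_diag {n : ℕ} (θ : Fin n → ℝ) (S : Finset (Fin n)) (x : Fin n → Bool) :
    (RX n θ * gammaD n S * (RX n θ).conjTranspose) x x
      = ∑ z : Fin n → Bool, (∏ l ∈ S, (Complex.I * sgn (z l))) * ∏ l, wf n θ l (x l) (z l) := by
  rw [Matrix.mul_apply]
  apply Finset.sum_congr rfl
  intro z _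
  rw [gammaD, Matrix.mul_diagonal, Matrix.conjTranspose_apply, RX_apply]
  have hW : (∏ l : Fin n, (if x l = z l then cf n θ l else df n θ l))
      * star (∏ l : Fin n, (if x l = z l then cf n θ l else df n θ l))
      = ∏ l : Fin n, wf n θ l (x l) (z l) := by
    rw [star_prod, ← Finset.prod_mul_distrib]
    apply Finset.prod_congr rfl
    intro l _
    exact conj_mul_entry θ l (x l) (z l)
  have hsgn : (∏ l ∈ S, (Complex.I * (if z l then (-1:ℂ) else 1)))
      = ∏ l ∈ S, (Complex.I * sgn (z l)) := rfl
  rw [mul_comm (∏ l : Fin n, (if x l = z l then cf n θ l else df n θ l)), mul_assoc, hW, hsgn]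

lemma sum_x {n k : ℕ} (θ : Fin n → ℝ) (S : Finset (Fin n)) (hS : S.card = k) (hkn : k ≤ n) :
    ∑ x : Fin n → Bool, (∏ j ∈ S, sgn (x j)) * (RX n θ * gammaD n S * (RX n θ).conjTranspose) x x
      = 2^n * Complex.I^k * ∏ l ∈ S, (Real.cos (θ l) : ℂ) := by
  set g : Fin n → Bool → Bool → ℂ := fun l a b =>
    (if l ∈ S then sgn a * (Complex.I * sgn b) else 1) * wf n θ l a b with hg
  have hA : ∀ x z : Fin n → Bool,
      (∏ j ∈ S, sgn (x j)) * ((∏ l ∈ S, (Complex.I * sgn (z l))) * ∏ l, wf n θ l (x l) (z l))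
        = ∏ l, g l (x l) (z l) := by
    intro x z
    have h1 : ∏ l : Fin n, (if l ∈ S then sgn (x l) * (Complex.I * sgn (z l)) else 1)
        = ∏ l ∈ S, (sgn (x l) * (Complex.I * sgn (z l))) := by
      rw [Finset.prod_ite_mem, Finset.univ_inter]
    symm
    calc ∏ l : Fin n, g l (x l) (z l)
        = (∏ l : Fin n, (if l ∈ S then sgn (x l) * (Complex.I * sgn (z l)) else 1))
            * ∏ l : Fin n, wf n θ l (x l) (z l) := Finset.prod_mul_distrib
      _ = (∏ l ∈ S, sgn (x l) * (Complex.I * sgn (z l)))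
            * ∏ l : Fin n, wf n θ l (x l) (z l) := by rw [h1]
      _ = ((∏ j ∈ S, sgn (x j)) * ∏ l ∈ S, (Complex.I * sgn (z l)))
            * ∏ l : Fin n, wf n θ l (x l) (z l) := by rw [Finset.prod_mul_distrib]
      _ = (∏ j ∈ S, sgn (x j)) * ((∏ l ∈ S, (Complex.I * sgn (z l)))
            * ∏ l : Fin n, wf n θ l (x l) (z l)) := by ring
  have hB : ∑ x : Fin n → Bool, (∏ j ∈ S, sgn (x j))
        * (RX n θ * gammaD n S * (RX n θ).conjTranspose) x x
      = ∏ l : Fin n, ((g l true true + g l true false) + (g l false true + g l false false)) := by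
    simp_rw [M_diag, Finset.mul_sum]
    have : ∀ x : Fin n → Bool, ∑ z : Fin n → Bool,
        (∏ j ∈ S, sgn (x j)) * ((∏ l ∈ S, (Complex.I * sgn (z l))) * ∏ l, wf n θ l (x l) (z l))
        = ∏ l : Fin n, (g l (x l) true + g l (x l) false) := by
      intro x
      simp_rw [hA]
      exact sum_prod_bool (fun l b => g l (x l) b)
    simp_rw [this]
    exact sum_prod_bool (fun l a => g l a true + g l a false)
  rw [hB]
  have hC : ∀ l : Fin n, ((g l true true + g l true false) + (g l false true + g l false false))
      = if l ∈ S then 2 * Complex.I * (Real.cos (θ l) : ℂ) else 2 := by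
    intro l
    have htrig : ((Real.cos (θ l / 2) : ℂ))^2 - ((Real.sin (θ l / 2) : ℂ))^2
        = (Real.cos (θ l) : ℂ) := by
      have h2 := Real.cos_sq_add_sin_sq (θ l / 2)
      have h3 := Real.cos_two_mul (θ l / 2)
      rw [show 2 * (θ l / 2) = θ l by ring] at h3
      have h4 : Real.cos (θ l / 2)^2 - Real.sin (θ l / 2)^2 = Real.cos (θ l) := by nlinarith
      exact_mod_cast h4
    have hpy : ((Real.cos (θ l / 2) : ℂ))^2 + ((Real.sin (θ l / 2) : ℂ))^2 = 1 := by
      exact_mod_cast Real.cos_sq_add_sin_sq (θ l / 2)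
    by_cases hl : l ∈ S
    · simp only [hg, if_pos hl, wf, sgn, if_true, if_false, Bool.true_eq_false,
        Bool.false_eq_true, reduceIte]
      rw [← htrig]; ring
    · simp only [hg, if_neg hl, wf, sgn, if_true, if_false, Bool.true_eq_false,
        Bool.false_eq_true, reduceIte, one_mul]
      rw [show (2:ℂ) = 2 * 1 by ring, ← hpy]; ring
  simp_rw [hC]
  rw [← Finset.prod_mul_prod_compl S]
  have hS1 : ∏ l ∈ S, (if l ∈ S then 2 * Complex.I * (Real.cos (θ l) : ℂ) else 2)
      = 2^k * Complex.I^k * ∏ l ∈ S, (Real.cos (θ l) : ℂ) := by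
    rw [Finset.prod_congr rfl (fun l hl => if_pos hl)]
    rw [show (fun l => 2 * Complex.I * (Real.cos (θ l) : ℂ))
      = fun l => (2 * Complex.I) * (Real.cos (θ l) : ℂ) from rfl]
    rw [Finset.prod_mul_distrib, Finset.prod_const, hS, mul_pow]
  have hS2 : ∏ l ∈ Sᶜ, (if l ∈ S then 2 * Complex.I * (Real.cos (θ l) : ℂ) else 2)
      = 2^(n - k) := by
    rw [Finset.prod_congr rfl (fun l hl => if_neg (Finset.mem_compl.1 hl))]
    rw [Finset.prod_const, Finset.card_compl, hS, Fintype.card_fin]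
  have h2n : (2:ℂ)^k * (2:ℂ)^(n-k) = 2^n := by
    rw [← pow_add, Nat.add_sub_cancel' hkn]
  rw [hS1, hS2, ← h2n]
  ring


end Aux

/-- For the `X`-rotation noise channel `Λ_r(A) = R_X(θ) A R_X(θ)†`, the average fidelity
in the `Γ_{2k}` subspace equals `C(n,k)^{−1} Σ_{S ∈ C([n],k)} Π_{l∈S} cos θ_l`; consequently,
when all `cos θ_l ≥ 0`, it lies between `min_l cos^k θ_l` and `max_l cos^k θ_l`. -/
theorem Bk_Xrotation (n k : ℕ) (hn : 0 < n) (hk : 1 ≤ k) (hkn : k ≤ n) (θ : Fin n → ℝ) :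
    Bk n k (fun A => RX n θ * A * (RX n θ).conjTranspose)
      = ((n.choose k : ℂ))⁻¹ *
          ∑ S ∈ (Finset.univ : Finset (Fin n)).powersetCard k,
            ∏ l ∈ S, ((Real.cos (θ l) : ℝ) : ℂ) ∧
    ((∀ l, 0 ≤ Real.cos (θ l)) →
      (Finset.univ.inf' ⟨⟨0, hn⟩, Finset.mem_univ _⟩ (fun l : Fin n => Real.cos (θ l)))^k
          ≤ ((n.choose k : ℝ))⁻¹ *
              ∑ S ∈ (Finset.univ : Finset (Fin n)).powersetCard k,
                ∏ l ∈ S, Real.cos (θ l) ∧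
      ((n.choose k : ℝ))⁻¹ *
              ∑ S ∈ (Finset.univ : Finset (Fin n)).powersetCard k,
                ∏ l ∈ S, Real.cos (θ l)
          ≤ (Finset.univ.sup' ⟨⟨0, hn⟩, Finset.mem_univ _⟩ (fun l : Fin n => Real.cos (θ l)))^k) := by
  have hCnat : 0 < n.choose k := Nat.choose_pos hkn
  have hcard : ((Finset.univ : Finset (Fin n)).powersetCard k).card = n.choose k := by
    rw [Finset.card_powersetCard, Finset.card_univ, Fintype.card_fin]
  constructor
  · -- main equality
    rw [Bk]
    rw [Finset.sum_comm]
    have hsum : ∀ S ∈ (Finset.univ : Finset (Fin n)).powersetCard k,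
        (∑ x : Fin n → Bool, (∏ j ∈ S, (if x j then (-1:ℂ) else 1)) *
          Matrix.trace (Matrix.single x x (1:ℂ) *
            ((fun A => RX n θ * A * (RX n θ).conjTranspose) (gammaD n S))))
        = (2:ℂ)^n * Complex.I^k * ∏ l ∈ S, (Real.cos (θ l) : ℂ) := by
      intro S hS
      have hSc : S.card = k := Finset.mem_powersetCard_univ.1 hS
      rw [← sum_x θ S hSc hkn]
      apply Finset.sum_congr rfl
      intro x _
      rw [trace_stdBasis_mul]
      rfl
    rw [Finset.sum_congr rfl hsum]
    have hfac : ∀ S ∈ (Finset.univ : Finset (Fin n)).powersetCard k,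
        (2:ℂ)^n * Complex.I^k * ∏ l ∈ S, (Real.cos (θ l) : ℂ)
        = ((2:ℂ)^n * Complex.I^k) * ∏ l ∈ S, (Real.cos (θ l) : ℂ) := by
      intro S _; ring
    rw [Finset.sum_congr rfl hfac, ← Finset.mul_sum]
    have h2 : ((2:ℂ)^n) ≠ 0 := pow_ne_zero _ two_ne_zero
    have hC : ((n.choose k : ℂ)) ≠ 0 := by
      exact_mod_cast Nat.cast_ne_zero.2 hCnat.ne'
    have hunit : (-Complex.I)^k * Complex.I^k = 1 := by
      rw [← mul_pow, neg_mul, Complex.I_mul_I, neg_neg, one_pow]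
    set T := ∑ S ∈ (Finset.univ : Finset (Fin n)).powersetCard k,
      ∏ l ∈ S, ((Real.cos (θ l) : ℝ) : ℂ) with hT
    calc (-Complex.I)^k / ((2:ℂ)^n * (n.choose k : ℂ)) * (((2:ℂ)^n * Complex.I^k) * T)
        = ((-Complex.I)^k * Complex.I^k) * ((2:ℂ)^n / ((2:ℂ)^n * (n.choose k : ℂ))) * T := by
          ring
      _ = ((n.choose k : ℂ))⁻¹ * T := by
          rw [hunit, one_mul]
          congr 1
          rw [div_mul_eq_div_div, div_self h2, one_div]
  · -- inequalities
    intro hcos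
    set m := Finset.univ.inf' ⟨⟨0, hn⟩, Finset.mem_univ _⟩ (fun l : Fin n => Real.cos (θ l))
      with hm
    set M := Finset.univ.sup' ⟨⟨0, hn⟩, Finset.mem_univ _⟩ (fun l : Fin n => Real.cos (θ l))
      with hM
    have hm0 : 0 ≤ m := Finset.le_inf' _ _ (fun b _ => hcos b)
    have hCr : (0:ℝ) < (n.choose k : ℝ) := by exact_mod_cast hCnat
    have hlow : ∀ S ∈ (Finset.univ : Finset (Fin n)).powersetCard k,
        m^k ≤ ∏ l ∈ S, Real.cos (θ l) := by
      intro S hS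
      have hSc : S.card = k := Finset.mem_powersetCard_univ.1 hS
      have : ∏ _l ∈ S, m ≤ ∏ l ∈ S, Real.cos (θ l) := by
        apply Finset.prod_le_prod (fun i _ => hm0)
        intro i _
        exact Finset.inf'_le _ (Finset.mem_univ i)
      rwa [Finset.prod_const, hSc] at this
    have hhigh : ∀ S ∈ (Finset.univ : Finset (Fin n)).powersetCard k,
        ∏ l ∈ S, Real.cos (θ l) ≤ M^k := by
      intro S hS
      have hSc : S.card = k := Finset.mem_powersetCard_univ.1 hS
      have : ∏ l ∈ S, Real.cos (θ l) ≤ ∏ _l ∈ S, M := by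
        apply Finset.prod_le_prod (fun i _ => hcos i)
        intro i _
        exact Finset.le_sup' (fun l : Fin n => Real.cos (θ l)) (Finset.mem_univ i)
      rwa [Finset.prod_const, hSc] at this
    constructor
    · have h1 : ((Finset.univ : Finset (Fin n)).powersetCard k).card • m^k
          ≤ ∑ S ∈ (Finset.univ : Finset (Fin n)).powersetCard k, ∏ l ∈ S, Real.cos (θ l) :=
        Finset.card_nsmul_le_sum _ _ _ hlow
      rw [hcard, nsmul_eq_mul] at h1
      calc m^k = ((n.choose k : ℝ))⁻¹ * ((n.choose k : ℝ) * m^k) := by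
            field_simp
        _ ≤ ((n.choose k : ℝ))⁻¹ *
              ∑ S ∈ (Finset.univ : Finset (Fin n)).powersetCard k, ∏ l ∈ S, Real.cos (θ l) :=
            mul_le_mul_of_nonneg_left h1 (inv_nonneg.2 hCr.le)
    · have h1 : ∑ S ∈ (Finset.univ : Finset (Fin n)).powersetCard k, ∏ l ∈ S, Real.cos (θ l)
          ≤ ((Finset.univ : Finset (Fin n)).powersetCard k).card • M^k :=
        Finset.sum_le_card_nsmul _ _ _ hhigh
      rw [hcard, nsmul_eq_mul] at h1
      calc ((n.choose k : ℝ))⁻¹ *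
              ∑ S ∈ (Finset.univ : Finset (Fin n)).powersetCard k, ∏ l ∈ S, Real.cos (θ l)
          ≤ ((n.choose k : ℝ))⁻¹ * ((n.choose k : ℝ) * M^k) :=
            mul_le_mul_of_nonneg_left h1 (inv_nonneg.2 hCr.le)
        _ = M^k := by field_simp
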